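/- Theorem (Kostant's formula, case 𝔥 = 0). Let (𝔤, B) be a finite-dimensional complex quadratic Lie algebra with orthonormal basis (Xᵢ), v = −(1/12) Σ_{i,j,k} B(Xᵢ,[Xⱼ,Xₖ]) XᵢXⱼXₖ ∈ C(𝔤), D_𝔤 = Σᵢ Xᵢ ⊗ Xᵢ + 1 ⊗ v ∈ U(𝔤) ⊗ C(𝔤), and Ω_𝔤 = Σᵢ Xᵢ² ∈ U(𝔤). Then there exists a constant c_𝔤 ∈ ℂ such that v² = c_𝔤·1 in C(𝔤) and D_𝔤² = Ω_𝔤 ⊗ 1 + c_𝔤·1 in U(𝔤) ⊗ C(𝔤). -/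

import Mathlib

/-!
The map `α x = ¼ Σᵢ γ(Xᵢ) γ[Xᵢ, x]` from `𝔤` to `C(𝔤)` (the image of `ad x ∈ 𝔰𝔬(𝔤)`) is a Lie
algebra map with `[α x, γ y] = γ [x, y]`, and `v = ⅓ Σᵢ γ(Xᵢ) α(Xᵢ)`. Then
`γ(y) v + v γ(y) = 2 α(y)` and `v` commutes with `α(𝔤)`, which together give `v² = ⅓ Σᵢ α(Xᵢ)²`.
Expanding, `Σᵢ α(Xᵢ)²` is a quartic `1/16 Σ T_{jkmn} γⱼ γₖ γₘ γₙ` with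
`T_{jkmn} = B([Xⱼ, Xₖ], [Xₘ, Xₙ])`. This `T` has the symmetries of an algebraic curvature tensor
(its Bianchi identity is the Jacobi identity), and the Clifford relations collapse such a quartic
to the scalar `-2 Σ T_{jkjk}`, as in the Lichnerowicz formula.

In `D² = (Σ Xᵢ ⊗ γᵢ)² + Σ Xᵢ ⊗ (γᵢ v + v γᵢ) + 1 ⊗ v²`, the symmetric part of the first term is
`Ω ⊗ 1` and its antisymmetric part `½ Σ [Xᵢ, Xⱼ] ⊗ γᵢ γⱼ` equals `-2 Σ Xᵢ ⊗ α(Xᵢ)`, which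
cancels the middle term.
-/

open CliffordAlgebra TensorProduct

section CliffordRelations

variable {A I : Type*} [Ring A] [DecidableEq I] {e : I → A}

theorem mul_swap_of_anticomm (he : ∀ i j, e i * e j + e j * e i = if i = j then 2 else 0)
    (i j : I) : e j * e i = (if i = j then 2 else 0) - e i * e j := by
  rw [← he i j]
  abel

theorem mul_mul_rotate_of_anticomm (he : ∀ i j, e i * e j + e j * e i = if i = j then 2 else 0)
    (k m n : I) : e n * e k * e m
      = e k * e m * e n + (if n = k then 2 else 0) * e m - (if n = m then 2 else 0) * e k := by
  rw [mul_swap_of_anticomm he k n, sub_mul, mul_assoc, mul_swap_of_anticomm he m n, mul_sub,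
    ← mul_assoc]
  simp only [mul_ite, ite_mul, mul_two, two_mul, mul_zero, zero_mul, eq_comm]
  abel

variable {K : Type*} [Field K] [CharZero K] [Algebra K A] [Fintype I]

theorem sum_smul_mul_of_symm (he : ∀ i j, e i * e j + e j * e i = if i = j then 2 else 0)
    {c : I → I → K} (hc : ∀ i j, c i j = c j i) :
    ∑ i, ∑ j, c i j • (e i * e j) = (∑ i, c i i) • 1 := by
  refine smul_right_injective A (two_ne_zero (α := K)) ?_
  calc (2 : K) • ∑ i, ∑ j, c i j • (e i * e j)
      = ∑ i, ∑ j, c i j • (e i * e j) + ∑ i, ∑ j, c j i • (e j * e i) := by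
        rw [two_smul, Finset.sum_comm (f := fun j i => c j i • (e j * e i))]
    _ = ∑ i, ∑ j, c i j • (e i * e j + e j * e i) := by
        simp only [hc, smul_add, Finset.sum_add_distrib]
    _ = (2 : K) • (∑ i, c i i) • 1 := by
        simp [he, smul_ite, ofNat_smul_eq_nsmul, Finset.sum_smul, Finset.mul_sum]

/-- Rotating the three factors of each term and reordering them back produces only contractions,
and by the cyclic identity the three rotated sums add up to zero. -/
theorem sum_smul_mul_mul_of_cyclic (he : ∀ i j, e i * e j + e j * e i = if i = j then 2 else 0)
    {S : I → I → I → K} (hanti : ∀ k m n, S k m n = -S k n m)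
    (hcyc : ∀ k m n, S k m n + S m n k + S n k m = 0) :
    ∑ k, ∑ m, ∑ n, S k m n • (e k * e m * e n) = ∑ m, (2 * ∑ k, S k k m) • e m := by
  have hdiag (k m : I) : S k m m = 0 := self_eq_neg.mp (hanti k m m)
  have hmk (k m : I) : S k m k = -S k k m := by rw [hanti k k m, neg_neg]
  have hrot₁ : ∑ k, ∑ m, ∑ n, S m n k • (e k * e m * e n)
      = ∑ k, ∑ m, ∑ n, S k m n • (e k * e m * e n + (if n = k then 2 else 0) * e m
          - (if n = m then 2 else 0) * e k) := by
    rw [Finset.sum_comm]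
    refine Finset.sum_congr rfl fun m _ => ?_
    rw [Finset.sum_comm]
    exact Finset.sum_congr rfl fun n _ => Finset.sum_congr rfl fun k _ => by
      rw [← mul_mul_rotate_of_anticomm he]
  have hrot₂ : ∑ k, ∑ m, ∑ n, S n k m • (e k * e m * e n)
      = ∑ k, ∑ m, ∑ n, S k m n • (e k * e m * e n + (if n = k then 2 else 0) * e m
          - (if m = k then 2 else 0) * e n) := by
    refine (Finset.sum_congr rfl fun _ _ => Finset.sum_comm).trans (Finset.sum_comm.trans ?_)
    refine Finset.sum_congr rfl fun n _ => Finset.sum_congr rfl fun k _ =>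
      Finset.sum_congr rfl fun m _ => ?_
    rw [mul_mul_rotate_of_anticomm he m n k, mul_mul_rotate_of_anticomm he n k m]
    simp only [@eq_comm _ m k, sub_add_cancel]
  have hsum : ∑ k, ∑ m, ∑ n, S k m n • (e k * e m * e n)
      + ∑ k, ∑ m, ∑ n, S m n k • (e k * e m * e n)
      + ∑ k, ∑ m, ∑ n, S n k m • (e k * e m * e n) = 0 := by
    simp only [← Finset.sum_add_distrib, ← add_smul, hcyc, zero_smul, Finset.sum_const_zero]
  rw [hrot₁, hrot₂] at hsum
  simp only [smul_add, smul_sub, Finset.sum_add_distrib, Finset.sum_sub_distrib, ite_mul,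
    zero_mul, smul_ite, smul_zero, Finset.sum_ite_irrel, Finset.sum_const_zero,
    Finset.sum_ite_eq', Finset.mem_univ, if_true, hdiag, hmk, neg_smul, zero_smul, two_mul,
    Finset.sum_neg_distrib] at hsum
  have hrhs : ∑ m, (2 * ∑ k, S k k m) • e m = (2 : K) • ∑ k, ∑ m, S k k m • e m := by
    simp only [mul_smul, Finset.sum_smul, Finset.smul_sum]
    rw [Finset.sum_comm]
  rw [hrhs]
  refine smul_right_injective A (three_ne_zero (α := K)) ?_
  linear_combination (norm := module) hsum

/-- The cubic identity applied to the last three factors leaves a quadratic form whose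
coefficients, the Ricci contractions `∑ k, T j k k m`, are symmetric. -/
theorem sum_smul_mul_mul_mul_of_bianchi
    (he : ∀ i j, e i * e j + e j * e i = if i = j then 2 else 0)
    {T : I → I → I → I → K} (hanti : ∀ j k m n, T j k m n = -T j k n m)
    (hpair : ∀ j k m n, T j k m n = T m n j k)
    (hbianchi : ∀ j k m n, T j k m n + T j m n k + T j n k m = 0) :
    ∑ j, ∑ k, ∑ m, ∑ n, T j k m n • (e j * e k * e m * e n)
      = (-2 * ∑ j, ∑ k, T j k j k) • 1 := by
  have hricci (j m : I) : ∑ k, T j k k m = ∑ k, T m k k j := by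
    refine Finset.sum_congr rfl fun k _ => ?_
    linear_combination -hanti m k k j + hpair m k j k + hanti j k m k
  calc ∑ j, ∑ k, ∑ m, ∑ n, T j k m n • (e j * e k * e m * e n)
      = ∑ j, e j * ∑ k, ∑ m, ∑ n, T j k m n • (e k * e m * e n) := by
        simp only [Finset.mul_sum, mul_smul_comm, mul_assoc]
    _ = ∑ j, e j * ∑ m, (2 * ∑ k, T j k k m) • e m := by
        simp only [sum_smul_mul_mul_of_cyclic he (hanti _) (hbianchi _)]
    _ = ∑ j, ∑ m, (2 * ∑ k, T j k k m) • (e j * e m) := by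
        simp only [Finset.mul_sum, mul_smul_comm]
    _ = (∑ j, 2 * ∑ k, T j k k j) • 1 :=
        sum_smul_mul_of_symm he fun j m => by rw [hricci]
    _ = (-2 * ∑ j, ∑ k, T j k j k) • 1 := by
        simp only [← Finset.mul_sum, fun j k => hanti j k k j, Finset.sum_neg_distrib, mul_neg,
          neg_mul]

theorem sum_tmul_mul_self {C : Type*} [Ring C] [Algebra K C] {f : I → C}
    (he : ∀ i j, e i * e j + e j * e i = if i = j then 2 else 0) :
    (∑ i, f i ⊗ₜ[K] e i) * (∑ i, f i ⊗ₜ[K] e i)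
      = (∑ i, f i * f i) ⊗ₜ 1 + (2⁻¹ : K) • ∑ i, ∑ j, (f i * f j - f j * f i) ⊗ₜ (e i * e j) := by
  have hexpand : (∑ i, f i ⊗ₜ[K] e i) * (∑ i, f i ⊗ₜ[K] e i)
      = ∑ i, ∑ j, (f i * f j) ⊗ₜ[K] (e i * e j) := by
    rw [Finset.sum_mul]
    simp only [Finset.mul_sum, Algebra.TensorProduct.tmul_mul_tmul]
  have hswap : ∑ i, ∑ j, (f i * f j) ⊗ₜ[K] (e i * e j)
      = (2 : K) • ((∑ i, f i * f i) ⊗ₜ[K] (1 : A)) - ∑ i, ∑ j, (f j * f i) ⊗ₜ[K] (e i * e j) := by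
    have hpt (i j : I) : (f j * f i) ⊗ₜ[K] (e j * e i)
        = (if i = j then (2 : K) • ((f i * f i) ⊗ₜ[K] (1 : A)) else 0)
          - (f j * f i) ⊗ₜ[K] (e i * e j) := by
      rw [mul_swap_of_anticomm he, tmul_sub]
      split_ifs with h
      · subst h
        rw [← tmul_smul, ofNat_smul_eq_nsmul, nsmul_eq_mul, mul_one, Nat.cast_ofNat]
      · rw [tmul_zero]
    rw [Finset.sum_comm]
    simp only [hpt, Finset.sum_sub_distrib, Finset.sum_ite_eq, Finset.mem_univ, if_true,
      ← Finset.smul_sum, ← sum_tmul]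
  rw [hexpand]
  simp only [sub_tmul, Finset.sum_sub_distrib]
  linear_combination (norm := module) (2⁻¹ : K) • hswap

end CliffordRelations

section QuadraticLieAlgebra

variable {K L : Type*} [CommRing K] [LieRing L] [LieAlgebra K L] {B : LinearMap.BilinForm K L}

theorem apply_lie_eq_apply_lie (hB_inv : ∀ x y z : L, B ⁅x, y⁆ z + B y ⁅x, z⁆ = 0) (x y z : L) :
    B ⁅x, y⁆ z = B x ⁅y, z⁆ := by
  have h := hB_inv y x z
  rw [← lie_skew y x, map_neg, LinearMap.neg_apply] at h
  linear_combination -h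

variable {I : Type*} [Fintype I] [DecidableEq I] {X : Module.Basis I K L}

theorem sum_apply_smul_map {M : Type*} [AddCommMonoid M] [Module K M]
    (hX : ∀ i j, B (X i) (X j) = if i = j then 1 else 0) (f : L →ₗ[K] M) (y : L) :
    ∑ i, B (X i) y • f (X i) = f y := by
  have hcoord (i : I) : B (X i) = X.coord i := X.ext fun j => by
    simp [hX, Finsupp.single_apply, eq_comm]
  simp only [hcoord, Module.Basis.coord_apply, ← map_smul, ← map_sum, X.sum_repr]

/-- `ad x` is skew for `B`, so the Casimir tensor `∑ i, X i ⊗ X i` is `ad`-invariant. -/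
theorem sum_apply_lie_basis {M : Type*} [AddCommGroup M] [Module K M]
    (hB_symm : ∀ x y : L, B x y = B y x) (hB_inv : ∀ x y z : L, B ⁅x, y⁆ z + B y ⁅x, z⁆ = 0)
    (hX : ∀ i j, B (X i) (X j) = if i = j then 1 else 0) (Φ : L →ₗ[K] L →ₗ[K] M) (x : L) :
    ∑ i, Φ ⁅x, X i⁆ (X i) = -∑ i, Φ (X i) ⁅x, X i⁆ := by
  have hexpand (y : L) : y = ∑ k, B (X k) y • X k := (sum_apply_smul_map hX LinearMap.id y).symm
  have hskew (i k : I) : B (X k) ⁅x, X i⁆ = -B (X i) ⁅x, X k⁆ := by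
    linear_combination hB_inv x (X k) (X i) + hB_symm (X i) ⁅x, X k⁆
  calc ∑ i, Φ ⁅x, X i⁆ (X i) = ∑ i, ∑ k, B (X k) ⁅x, X i⁆ • Φ (X k) (X i) := by
        refine Finset.sum_congr rfl fun i _ => ?_
        conv_lhs => rw [hexpand ⁅x, X i⁆]
        simp
    _ = -∑ k, ∑ i, B (X i) ⁅x, X k⁆ • Φ (X k) (X i) := by
        rw [Finset.sum_comm, ← Finset.sum_neg_distrib]
        refine Finset.sum_congr rfl fun k _ => ?_
        rw [← Finset.sum_neg_distrib]
        exact Finset.sum_congr rfl fun i _ => by rw [hskew, neg_smul]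
    _ = -∑ i, Φ (X i) ⁅x, X i⁆ := by
        congr 1
        refine Finset.sum_congr rfl fun i _ => ?_
        conv_rhs => rw [hexpand ⁅x, X i⁆]
        simp

end QuadraticLieAlgebra

section CliffordGenerators

variable {K L : Type*} [CommRing K] [LieRing L] [LieAlgebra K L] {B : LinearMap.BilinForm K L}

local notation "γ" => ι (LinearMap.BilinMap.toQuadraticMap B)

theorem ι_mul_ι_add_swap_of_symm (hB_symm : ∀ x y : L, B x y = B y x) (x y : L) :
    γ x * γ y + γ y * γ x = (2 * B x y) • 1 := by
  rw [ι_mul_ι_add_swap, LinearMap.BilinMap.polar_toQuadraticMap, hB_symm y x,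
    Algebra.algebraMap_eq_smul_one, two_mul]

theorem ι_basis_mul_add_swap {I : Type*} [DecidableEq I] {X : Module.Basis I K L}
    (hB_symm : ∀ x y : L, B x y = B y x) (hX : ∀ i j, B (X i) (X j) = if i = j then 1 else 0)
    (i j : I) : γ (X i) * γ (X j) + γ (X j) * γ (X i) = if i = j then 2 else 0 := by
  rw [ι_mul_ι_add_swap_of_symm hB_symm, hX]
  split_ifs <;> simp [ofNat_smul_eq_nsmul]

theorem ι_mul_ι_mul_ι_sub (hB_symm : ∀ x y : L, B x y = B y x) (a b c : L) :
    γ a * γ b * γ c - γ c * γ a * γ b = (2 * B b c) • γ a - (2 * B a c) • γ b := by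
  calc _ = γ a * (γ b * γ c + γ c * γ b) - (γ a * γ c + γ c * γ a) * γ b := by noncomm_ring
    _ = _ := by
      rw [ι_mul_ι_add_swap_of_symm hB_symm, ι_mul_ι_add_swap_of_symm hB_symm, mul_smul_comm,
        smul_mul_assoc, mul_one, one_mul]

end CliffordGenerators

section SpinRepresentation

variable {K L : Type*} [Field K] [LieRing L] [LieAlgebra K L] {B : LinearMap.BilinForm K L}
  {I : Type*} [Fintype I] {X : Module.Basis I K L}

local notation "γ" => ι (LinearMap.BilinMap.toQuadraticMap B)

variable (B X) in
/-- The map `α : 𝔤 → C(𝔤)`. -/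
noncomputable def cliffordAd : L →ₗ[K] CliffordAlgebra B.toQuadraticMap where
  toFun x := (4⁻¹ : K) • ∑ i, γ (X i) * γ ⁅X i, x⁆
  map_add' x y := by simp [lie_add, mul_add, Finset.sum_add_distrib, smul_add]
  map_smul' c x := by simp [Finset.smul_sum, smul_comm c]

theorem cliffordAd_apply (x : L) :
    cliffordAd B X x = (4⁻¹ : K) • ∑ i, γ (X i) * γ ⁅X i, x⁆ := rfl

theorem cliffordAd_eq_sum [DecidableEq I] (hB_symm : ∀ x y : L, B x y = B y x)
    (hB_inv : ∀ x y z : L, B ⁅x, y⁆ z + B y ⁅x, z⁆ = 0)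
    (hX : ∀ i j, B (X i) (X j) = if i = j then 1 else 0) (x : L) :
    cliffordAd B X x = -(4⁻¹ : K) • ∑ m, ∑ n, B x ⁅X m, X n⁆ • (γ (X m) * γ (X n)) := by
  have hcoeff (m n : I) : B (X n) ⁅X m, x⁆ = -B x ⁅X m, X n⁆ := by
    rw [← apply_lie_eq_apply_lie hB_inv, hB_symm, ← lie_skew, map_neg]
  rw [cliffordAd_apply, neg_smul, ← smul_neg, ← Finset.sum_neg_distrib]
  congr 1
  refine Finset.sum_congr rfl fun m _ => ?_
  rw [← sum_apply_smul_map hX γ ⁅X m, x⁆, Finset.mul_sum, ← Finset.sum_neg_distrib]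
  exact Finset.sum_congr rfl fun n _ => by rw [mul_smul_comm, hcoeff, neg_smul]

variable (B X) in
/-- Kostant's cubic element `v`. -/
noncomputable def cliffordCubic : CliffordAlgebra B.toQuadraticMap :=
  (3⁻¹ : K) • ∑ i, γ (X i) * cliffordAd B X (X i)

variable [CharZero K] [DecidableEq I]

theorem cliffordAd_mul_ι_sub (hB_symm : ∀ x y : L, B x y = B y x)
    (hB_inv : ∀ x y z : L, B ⁅x, y⁆ z + B y ⁅x, z⁆ = 0)
    (hX : ∀ i j, B (X i) (X j) = if i = j then 1 else 0) (x y : L) :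
    cliffordAd B X x * γ y - γ y * cliffordAd B X x = γ ⁅x, y⁆ := by
  have h₁ : ∑ i, B ⁅X i, x⁆ y • γ (X i) = γ ⁅x, y⁆ := by
    simp_rw [apply_lie_eq_apply_lie hB_inv]
    exact sum_apply_smul_map hX γ _
  have h₂ : ∑ i, B (X i) y • γ ⁅X i, x⁆ = -γ ⁅x, y⁆ := by
    simp_rw [← lie_skew _ x, map_neg, smul_neg, Finset.sum_neg_distrib]
    exact congrArg Neg.neg (sum_apply_smul_map hX (γ ∘ₗ LieModule.toEnd K L L x) y)
  calc _ = (4⁻¹ : K) • ∑ i, (γ (X i) * γ ⁅X i, x⁆ * γ y - γ y * γ (X i) * γ ⁅X i, x⁆) := by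
        simp only [cliffordAd_apply, smul_mul_assoc, mul_smul_comm, Finset.sum_mul,
          Finset.mul_sum, ← smul_sub, ← Finset.sum_sub_distrib, mul_assoc]
    _ = (4⁻¹ : K) • ((2 : K) • ∑ i, B ⁅X i, x⁆ y • γ (X i)
          - (2 : K) • ∑ i, B (X i) y • γ ⁅X i, x⁆) := by
        simp only [ι_mul_ι_mul_ι_sub hB_symm, mul_smul, Finset.smul_sum, Finset.sum_sub_distrib]
    _ = γ ⁅x, y⁆ := by
        rw [h₁, h₂]
        module

theorem cliffordAd_mul_cliffordAd_sub (hB_symm : ∀ x y : L, B x y = B y x)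
    (hB_inv : ∀ x y z : L, B ⁅x, y⁆ z + B y ⁅x, z⁆ = 0)
    (hX : ∀ i j, B (X i) (X j) = if i = j then 1 else 0) (x y : L) :
    cliffordAd B X x * cliffordAd B X y - cliffordAd B X y * cliffordAd B X x
      = cliffordAd B X ⁅x, y⁆ := by
  have hder (a b : L) : cliffordAd B X x * (γ a * γ b) - γ a * γ b * cliffordAd B X x
      = γ ⁅x, a⁆ * γ b + γ a * γ ⁅x, b⁆ := by
    rw [← cliffordAd_mul_ι_sub hB_symm hB_inv hX x a, ← cliffordAd_mul_ι_sub hB_symm hB_inv hX x b]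
    noncomm_ring
  have hskew := sum_apply_lie_basis hB_symm hB_inv hX
    (LinearMap.mk₂ K (fun a b => γ a * γ ⁅b, y⁆) (by simp [add_mul]) (by simp)
      (by simp [mul_add]) (by simp)) x
  simp only [LinearMap.mk₂_apply] at hskew
  calc _ = (4⁻¹ : K) • ∑ j, (cliffordAd B X x * (γ (X j) * γ ⁅X j, y⁆)
        - γ (X j) * γ ⁅X j, y⁆ * cliffordAd B X x) := by
        simp only [cliffordAd_apply y, mul_smul_comm, smul_mul_assoc, Finset.mul_sum,
          Finset.sum_mul, ← smul_sub, ← Finset.sum_sub_distrib]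
    _ = (4⁻¹ : K) • (∑ j, γ ⁅x, X j⁆ * γ ⁅X j, y⁆ + ∑ j, γ (X j) * γ ⁅x, ⁅X j, y⁆⁆) := by
        simp only [hder, Finset.sum_add_distrib]
    _ = cliffordAd B X ⁅x, y⁆ := by
        rw [hskew, neg_add_eq_sub, ← Finset.sum_sub_distrib, cliffordAd_apply]
        simp only [← mul_sub, ← map_sub, leibniz_lie x (X _) y, add_sub_cancel_left]

theorem cliffordCubic_eq (hB_symm : ∀ x y : L, B x y = B y x)
    (hB_inv : ∀ x y z : L, B ⁅x, y⁆ z + B y ⁅x, z⁆ = 0)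
    (hX : ∀ i j, B (X i) (X j) = if i = j then 1 else 0) :
    cliffordCubic B X = (-(1 / 12) : K) • ∑ i, ∑ j, ∑ k,
      B (X i) ⁅X j, X k⁆ • (γ (X i) * γ (X j) * γ (X k)) := by
  simp only [cliffordCubic, cliffordAd_eq_sum hB_symm hB_inv hX, mul_smul_comm, Finset.mul_sum,
    Finset.smul_sum, smul_smul, mul_assoc]
  ring_nf

theorem ι_mul_cliffordCubic_add (hB_symm : ∀ x y : L, B x y = B y x)
    (hB_inv : ∀ x y z : L, B ⁅x, y⁆ z + B y ⁅x, z⁆ = 0)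
    (hX : ∀ i j, B (X i) (X j) = if i = j then 1 else 0) (y : L) :
    γ y * cliffordCubic B X + cliffordCubic B X * γ y = (2 : K) • cliffordAd B X y := by
  have hterm (i : I) : γ y * (γ (X i) * cliffordAd B X (X i))
      + γ (X i) * cliffordAd B X (X i) * γ y
      = (2 * B (X i) y) • cliffordAd B X (X i) + γ (X i) * γ ⁅X i, y⁆ := by
    rw [← cliffordAd_mul_ι_sub hB_symm hB_inv hX, hB_symm (X i),
      ← smul_one_mul, ← ι_mul_ι_add_swap_of_symm hB_symm]
    noncomm_ring
  calc _ = (3⁻¹ : K) • ∑ i, (γ y * (γ (X i) * cliffordAd B X (X i))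
        + γ (X i) * cliffordAd B X (X i) * γ y) := by
        simp only [cliffordCubic, mul_smul_comm, smul_mul_assoc, Finset.mul_sum, Finset.sum_mul,
          ← smul_add, ← Finset.sum_add_distrib]
    _ = (3⁻¹ : K) • ((2 : K) • ∑ i, B (X i) y • cliffordAd B X (X i)
        + (4 : K) • cliffordAd B X y) := by
        rw [Finset.sum_congr rfl fun i _ => hterm i, Finset.sum_add_distrib, cliffordAd_apply y,
          smul_smul, mul_inv_cancel₀ (by norm_num : (4 : K) ≠ 0), one_smul, Finset.smul_sum]
        simp only [mul_smul]
    _ = (2 : K) • cliffordAd B X y := by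
        rw [sum_apply_smul_map hX (cliffordAd B X) y]
        module

theorem cliffordAd_mul_cliffordCubic (hB_symm : ∀ x y : L, B x y = B y x)
    (hB_inv : ∀ x y z : L, B ⁅x, y⁆ z + B y ⁅x, z⁆ = 0)
    (hX : ∀ i j, B (X i) (X j) = if i = j then 1 else 0) (x : L) :
    cliffordAd B X x * cliffordCubic B X = cliffordCubic B X * cliffordAd B X x := by
  have hterm (i : I) : cliffordAd B X x * (γ (X i) * cliffordAd B X (X i))
      - γ (X i) * cliffordAd B X (X i) * cliffordAd B X x
      = γ ⁅x, X i⁆ * cliffordAd B X (X i) + γ (X i) * cliffordAd B X ⁅x, X i⁆ := by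
    rw [← cliffordAd_mul_ι_sub hB_symm hB_inv hX,
      ← cliffordAd_mul_cliffordAd_sub hB_symm hB_inv hX]
    noncomm_ring
  have hskew := sum_apply_lie_basis hB_symm hB_inv hX
    ((LinearMap.mul K _).compl₁₂ γ (cliffordAd B X)) x
  simp only [LinearMap.compl₁₂_apply, LinearMap.mul_apply'] at hskew
  rw [← sub_eq_zero]
  calc _ = (3⁻¹ : K) • ∑ i, (cliffordAd B X x * (γ (X i) * cliffordAd B X (X i))
        - γ (X i) * cliffordAd B X (X i) * cliffordAd B X x) := by
        simp only [cliffordCubic, mul_smul_comm, smul_mul_assoc, Finset.mul_sum, Finset.sum_mul,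
          ← smul_sub, ← Finset.sum_sub_distrib]
    _ = 0 := by
        rw [Finset.sum_congr rfl fun i _ => hterm i, Finset.sum_add_distrib, hskew,
          neg_add_cancel, smul_zero]

theorem cliffordCubic_mul_self_eq_sum (hB_symm : ∀ x y : L, B x y = B y x)
    (hB_inv : ∀ x y z : L, B ⁅x, y⁆ z + B y ⁅x, z⁆ = 0)
    (hX : ∀ i j, B (X i) (X j) = if i = j then 1 else 0) :
    cliffordCubic B X * cliffordCubic B X
      = (3⁻¹ : K) • ∑ i, cliffordAd B X (X i) * cliffordAd B X (X i) := by
  have hv3 : ∑ i, γ (X i) * cliffordAd B X (X i) = (3 : K) • cliffordCubic B X := by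
    rw [cliffordCubic, smul_smul, mul_inv_cancel₀ (by norm_num : (3 : K) ≠ 0), one_smul]
  have h : cliffordCubic B X * cliffordCubic B X
      = (3⁻¹ : K) • ((2 : K) • ∑ i, cliffordAd B X (X i) * cliffordAd B X (X i))
        - cliffordCubic B X * cliffordCubic B X := by
    calc cliffordCubic B X * cliffordCubic B X
        = (3⁻¹ : K) • ∑ i, γ (X i) * (cliffordAd B X (X i) * cliffordCubic B X) := by
          rw [cliffordCubic, smul_mul_assoc, Finset.sum_mul, ← cliffordCubic]
          simp only [mul_assoc]
      _ = (3⁻¹ : K) • ∑ i, (γ (X i) * cliffordCubic B X) * cliffordAd B X (X i) := by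
          simp only [cliffordAd_mul_cliffordCubic hB_symm hB_inv hX, mul_assoc]
      _ = (3⁻¹ : K) • ∑ i, ((2 : K) • cliffordAd B X (X i) - cliffordCubic B X * γ (X i))
            * cliffordAd B X (X i) := by
          simp only [← ι_mul_cliffordCubic_add hB_symm hB_inv hX, add_sub_cancel_right]
      _ = _ := by
          simp only [sub_mul, Finset.sum_sub_distrib, smul_mul_assoc, ← Finset.smul_sum,
            mul_assoc, ← Finset.mul_sum, hv3, mul_smul_comm]
          module
  linear_combination (norm := module) (2⁻¹ : K) • h

theorem sum_cliffordAd_mul_self (hB_symm : ∀ x y : L, B x y = B y x)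
    (hB_inv : ∀ x y z : L, B ⁅x, y⁆ z + B y ⁅x, z⁆ = 0)
    (hX : ∀ i j, B (X i) (X j) = if i = j then 1 else 0) :
    ∑ l, cliffordAd B X (X l) * cliffordAd B X (X l)
      = (-(8⁻¹ : K) * ∑ j, ∑ k, B ⁅X j, X k⁆ ⁅X j, X k⁆) • 1 := by
  have hquartic := sum_smul_mul_mul_mul_of_bianchi (ι_basis_mul_add_swap hB_symm hX)
    (T := fun j k m n => B ⁅X j, X k⁆ ⁅X m, X n⁆)
    (fun j k m n => by rw [← lie_skew (X n) (X m), map_neg, neg_neg])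
    (fun j k m n => hB_symm _ _)
    (fun j k m n => by
      simp only [apply_lie_eq_apply_lie hB_inv, ← map_add, lie_jacobi, map_zero])
  have hexp (j k : I) : ∑ l, B (X l) ⁅X j, X k⁆ • cliffordAd B X (X l)
      = cliffordAd B X ⁅X j, X k⁆ := sum_apply_smul_map hX _ _
  calc ∑ l, cliffordAd B X (X l) * cliffordAd B X (X l)
      = -(4⁻¹ : K) • ∑ l, ∑ j, ∑ k,
          B (X l) ⁅X j, X k⁆ • (γ (X j) * γ (X k) * cliffordAd B X (X l)) := by
        conv_lhs => enter [2, l, 1]; rw [cliffordAd_eq_sum hB_symm hB_inv hX]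
        simp only [smul_mul_assoc, Finset.sum_mul, Finset.smul_sum]
    _ = -(4⁻¹ : K) • ∑ j, ∑ k, γ (X j) * γ (X k) * cliffordAd B X ⁅X j, X k⁆ := by
        simp only [← hexp, Finset.mul_sum, mul_smul_comm]
        rw [Finset.sum_comm]
        exact congrArg _ (Finset.sum_congr rfl fun j _ => Finset.sum_comm)
    _ = (16⁻¹ : K) • ∑ j, ∑ k, ∑ m, ∑ n,
          B ⁅X j, X k⁆ ⁅X m, X n⁆ • (γ (X j) * γ (X k) * γ (X m) * γ (X n)) := by
        simp only [cliffordAd_eq_sum hB_symm hB_inv hX, mul_smul_comm, Finset.mul_sum,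
          Finset.smul_sum, smul_smul, mul_assoc]
        ring_nf
    _ = _ := by
        rw [hquartic, smul_smul]
        ring_nf

theorem cliffordCubic_mul_self (hB_symm : ∀ x y : L, B x y = B y x)
    (hB_inv : ∀ x y z : L, B ⁅x, y⁆ z + B y ⁅x, z⁆ = 0)
    (hX : ∀ i j, B (X i) (X j) = if i = j then 1 else 0) :
    cliffordCubic B X * cliffordCubic B X
      = (-(24⁻¹ : K) * ∑ j, ∑ k, B ⁅X j, X k⁆ ⁅X j, X k⁆) • 1 := by
  rw [cliffordCubic_mul_self_eq_sum hB_symm hB_inv hX, sum_cliffordAd_mul_self hB_symm hB_inv hX,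
    smul_smul]
  ring_nf

end SpinRepresentation

section Dirac

attribute [local instance] LieRing.ofAssociativeRing LieAlgebra.ofAssociativeAlgebra

variable {K L : Type*} [Field K] [CharZero K] [LieRing L] [LieAlgebra K L]
  {B : LinearMap.BilinForm K L} {I : Type*} [Fintype I] [DecidableEq I] {X : Module.Basis I K L}

local notation "γ" => ι (LinearMap.BilinMap.toQuadraticMap B)

theorem sum_ι_lie_tmul (hB_symm : ∀ x y : L, B x y = B y x)
    (hB_inv : ∀ x y z : L, B ⁅x, y⁆ z + B y ⁅x, z⁆ = 0)
    (hX : ∀ i j, B (X i) (X j) = if i = j then 1 else 0) :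
    ∑ i, ∑ j, UniversalEnvelopingAlgebra.ι K ⁅X i, X j⁆ ⊗ₜ[K] (γ (X i) * γ (X j))
      = -(4 : K) • ∑ l, UniversalEnvelopingAlgebra.ι K (X l) ⊗ₜ[K] cliffordAd B X (X l) := by
  have hexp (y : L) : ∑ l, B (X l) y • UniversalEnvelopingAlgebra.ι K (X l)
      = UniversalEnvelopingAlgebra.ι K y :=
    sum_apply_smul_map hX (UniversalEnvelopingAlgebra.ι K).toLinearMap y
  symm
  calc -(4 : K) • ∑ l, UniversalEnvelopingAlgebra.ι K (X l) ⊗ₜ[K] cliffordAd B X (X l)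
      = ∑ l, ∑ i, ∑ j, B (X l) ⁅X i, X j⁆
          • (UniversalEnvelopingAlgebra.ι K (X l) ⊗ₜ[K] (γ (X i) * γ (X j))) := by
        simp only [cliffordAd_eq_sum hB_symm hB_inv hX, tmul_smul, tmul_sum, Finset.smul_sum,
          smul_smul, neg_mul, mul_neg, neg_neg, mul_inv_cancel_left₀ (by norm_num : (4 : K) ≠ 0)]
    _ = ∑ i, ∑ j, (∑ l, B (X l) ⁅X i, X j⁆ • UniversalEnvelopingAlgebra.ι K (X l))
          ⊗ₜ[K] (γ (X i) * γ (X j)) := by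
        simp only [sum_tmul, smul_tmul']
        rw [Finset.sum_comm]
        exact Finset.sum_congr rfl fun i _ => Finset.sum_comm
    _ = _ := by simp only [hexp]

theorem dirac_sq (hB_symm : ∀ x y : L, B x y = B y x)
    (hB_inv : ∀ x y z : L, B ⁅x, y⁆ z + B y ⁅x, z⁆ = 0)
    (hX : ∀ i j, B (X i) (X j) = if i = j then 1 else 0) :
    (∑ i, UniversalEnvelopingAlgebra.ι K (X i) ⊗ₜ[K] γ (X i) + 1 ⊗ₜ[K] cliffordCubic B X) ^ 2
      = (∑ i, UniversalEnvelopingAlgebra.ι K (X i) ^ 2) ⊗ₜ 1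
        + 1 ⊗ₜ (cliffordCubic B X * cliffordCubic B X) := by
  have hsq := sum_tmul_mul_self (K := K) (f := fun i => UniversalEnvelopingAlgebra.ι K (X i))
    (ι_basis_mul_add_swap hB_symm hX)
  have hcomm (i j : I) :
      UniversalEnvelopingAlgebra.ι K (X i) * UniversalEnvelopingAlgebra.ι K (X j)
        - UniversalEnvelopingAlgebra.ι K (X j) * UniversalEnvelopingAlgebra.ι K (X i)
      = UniversalEnvelopingAlgebra.ι K ⁅X i, X j⁆ := by
    rw [LieHom.map_lie, LieRing.of_associative_ring_bracket]
  have hcross : (∑ i, UniversalEnvelopingAlgebra.ι K (X i) ⊗ₜ[K] γ (X i))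
        * (1 ⊗ₜ cliffordCubic B X)
      + (1 ⊗ₜ cliffordCubic B X) * (∑ i, UniversalEnvelopingAlgebra.ι K (X i) ⊗ₜ[K] γ (X i))
      = (2 : K) • ∑ i, UniversalEnvelopingAlgebra.ι K (X i) ⊗ₜ[K] cliffordAd B X (X i) := by
    simp only [Finset.sum_mul, Finset.mul_sum, Algebra.TensorProduct.tmul_mul_tmul, mul_one,
      one_mul, ← Finset.sum_add_distrib, ← tmul_add, ι_mul_cliffordCubic_add hB_symm hB_inv hX,
      tmul_smul, Finset.smul_sum]
  rw [sq, add_mul, mul_add, mul_add, hsq, Algebra.TensorProduct.tmul_mul_tmul, one_mul]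
  simp only [hcomm, sum_ι_lie_tmul hB_symm hB_inv hX, sq]
  linear_combination (norm := module) hcross

end Dirac

theorem kostant_formula_quadratic_general {L : Type*} [LieRing L] [LieAlgebra ℂ L]
    (B : LinearMap.BilinForm ℂ L)
    (hB_symm : ∀ x y : L, B x y = B y x)
    (hB_inv : ∀ x y z : L, B ⁅x, y⁆ z + B y ⁅x, z⁆ = 0)
    {I : Type*} [Fintype I] [DecidableEq I] (X : Module.Basis I ℂ L)
    (hX : ∀ i j, B (X i) (X j) = if i = j then 1 else 0)
    (v : CliffordAlgebra B.toQuadraticMap)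
    (hv : v = (-(1/12 : ℂ)) • ∑ i : I, ∑ j : I, ∑ k : I,
        B (X i) ⁅X j, X k⁆ •
          (ι B.toQuadraticMap (X i) * ι B.toQuadraticMap (X j) * ι B.toQuadraticMap (X k)))
    (D : UniversalEnvelopingAlgebra ℂ L ⊗[ℂ] CliffordAlgebra B.toQuadraticMap)
    (hD : D = ∑ i : I,
        (UniversalEnvelopingAlgebra.ι ℂ (X i)) ⊗ₜ[ℂ] (ι B.toQuadraticMap (X i))
        + 1 ⊗ₜ[ℂ] v)
    (Ω : UniversalEnvelopingAlgebra ℂ L)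
    (hΩ : Ω = ∑ i : I, (UniversalEnvelopingAlgebra.ι ℂ (X i)) ^ 2) :
    ∃ c : ℂ, v ^ 2 = c • (1 : CliffordAlgebra B.toQuadraticMap) ∧
      D ^ 2 = Ω ⊗ₜ[ℂ] 1
        + c • (1 : UniversalEnvelopingAlgebra ℂ L ⊗[ℂ] CliffordAlgebra B.toQuadraticMap) := by
  have hv' : v = cliffordCubic B X := hv.trans (cliffordCubic_eq hB_symm hB_inv hX).symm
  refine ⟨-(24⁻¹ : ℂ) * ∑ j, ∑ k, B ⁅X j, X k⁆ ⁅X j, X k⁆, ?_, ?_⟩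
  · rw [sq, hv', cliffordCubic_mul_self hB_symm hB_inv hX]
  · rw [hD, hv', hΩ, dirac_sq hB_symm hB_inv hX, cliffordCubic_mul_self hB_symm hB_inv hX,
      tmul_smul, Algebra.TensorProduct.one_def]

/-- Kostant's formula in the case `𝔥 = 0`: for a finite-dimensional complex quadratic
Lie algebra `(𝔤, B)`, there is a constant `c_𝔤 ∈ ℂ` such that `v² = c_𝔤 · 1` in `C(𝔤)`
and `D_𝔤² = Ω_𝔤 ⊗ 1 + c_𝔤 · 1` in `U(𝔤) ⊗ C(𝔤)`. -/
theorem kostant_formula_quadratic {L : Type*} [LieRing L] [LieAlgebra ℂ L]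
    [FiniteDimensional ℂ L]
    (B : LinearMap.BilinForm ℂ L)
    (hB_symm : ∀ x y : L, B x y = B y x)
    (hB_inv : ∀ x y z : L, B ⁅x, y⁆ z + B y ⁅x, z⁆ = 0)
    (hB_nd : B.Nondegenerate)
    {I : Type*} [Fintype I] [DecidableEq I] (X : Module.Basis I ℂ L)
    (hX : ∀ i j, B (X i) (X j) = if i = j then 1 else 0)
    (v : CliffordAlgebra B.toQuadraticMap)
    (hv : v = (-(1/12 : ℂ)) • ∑ i : I, ∑ j : I, ∑ k : I,
        B (X i) ⁅X j, X k⁆ •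
          (ι B.toQuadraticMap (X i) * ι B.toQuadraticMap (X j) * ι B.toQuadraticMap (X k)))
    (D : UniversalEnvelopingAlgebra ℂ L ⊗[ℂ] CliffordAlgebra B.toQuadraticMap)
    (hD : D = ∑ i : I,
        (UniversalEnvelopingAlgebra.ι ℂ (X i)) ⊗ₜ[ℂ] (ι B.toQuadraticMap (X i))
        + 1 ⊗ₜ[ℂ] v)
    (Ω : UniversalEnvelopingAlgebra ℂ L)
    (hΩ : Ω = ∑ i : I, (UniversalEnvelopingAlgebra.ι ℂ (X i)) ^ 2) :
    ∃ c : ℂ, v ^ 2 = c • (1 : CliffordAlgebra B.toQuadraticMap) ∧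
      D ^ 2 = Ω ⊗ₜ[ℂ] 1
        + c • (1 : UniversalEnvelopingAlgebra ℂ L ⊗[ℂ] CliffordAlgebra B.toQuadraticMap) :=
  kostant_formula_quadratic_general B hB_symm hB_inv X hX v hv D hD Ω hΩ
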